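/- There exist real numbers b₍₀,₁₎, b₍₁,₀₎, b₍₋₁,₀₎, b₍₀,₋₁₎, c₁, c₋₁ such that for every n ≥ 5 the following holds on ℝ^(ℤ/nℤ × ℤ/nℤ): letting X = S⊗I and Y = I⊗S be the horizontal and vertical shift matrices, and letting B be the horizontal concatenation of the two matrices ∑_{(j,k) ∈ {(0,1),(1,0),(−1,0),(0,−1)}} b₍j,k₎·(I − Xʲ Yᵏ) and ∑_{j ∈ {1,−1}} c_j·(I − Xʲ), one has B Bᵀ = 6·I − (26/15)·(X + Xᵀ + Y + Yᵀ) + (1/10)·(XY + XYᵀ + XᵀY + XᵀYᵀ) + (2/15)·(X² + (Xᵀ)² + Y² + (Yᵀ)²). -/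

import Mathlib

/-!
The four matrices `X, Xᵀ, Y, Yᵀ` commute pairwise and `X Xᵀ = Y Yᵀ = 1`, so `B Bᵀ` can be
computed in a commutative ring, as `P(x, y) P(x⁻¹, y⁻¹) + Q(x) Q(x⁻¹)` for Laurent polynomials
`P, Q`. Comparing coefficients with the stencil gives six polynomial equations in the weights.
Taking `b₍₁,₀₎ = b₍₋₁,₀₎`, `b₍₀,₁₎ - b₍₀,₋₁₎ = 1` and `c₁ - c₋₁ = 1`, they reduce to
`s² = 23/15` for `s = b₍₀,₁₎ + b₍₀,₋₁₎`, `b₍₁,₀₎ = 1/(10 s)` and `t² = 104/69` for `t = c₁ + c₋₁`.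
-/

open Matrix Kronecker

/-- The `n×n` cyclic shift matrix `S` over `ℤ/nℤ` (modelled as `Fin n`):
`S i j = 1` if `i = j + 1 (mod n)`, and `0` otherwise. -/
noncomputable def cycShift (n : ℕ) : Matrix (Fin n) (Fin n) ℝ :=
  Matrix.of fun i j => if (i : ℕ) = ((j : ℕ) + 1) % n then 1 else 0

/-- The coefficients of `1`, `x`, `y`, `xy`, `x²`, `y²` in `P(x, y) P(x⁻¹, y⁻¹) + Q(x) Q(x⁻¹)`,
where `P = a (1 - y) + b (1 - x) + b (1 - x⁻¹) + d (1 - y⁻¹)` and `Q = e (1 - x) + f (1 - x⁻¹)`,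
equal the stencil weights `w₀, -w₁, w₂, w₃`. -/
structure StencilMoments {A : Type*} [CommRing A] (a b d e f w₀ w₁ w₂ w₃ : A) : Prop where
  center : (a + 2 * b + d) ^ 2 + a ^ 2 + 2 * b ^ 2 + d ^ 2 + (e + f) ^ 2 + e ^ 2 + f ^ 2 = w₀
  near_x : 2 * (a + 2 * b + d) * b + (e + f) ^ 2 = w₁
  near_y : (a + 2 * b + d) * (a + d) = w₁
  diagonal : b * (a + d) = w₂
  far_x : b ^ 2 + e * f = w₃
  far_y : a * d = w₃

namespace StencilMoments

variable {A : Type*} [CommRing A] {a b d e f w₀ w₁ w₂ w₃ : A}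

theorem map {B : Type*} [CommRing B] (h : StencilMoments a b d e f w₀ w₁ w₂ w₃) (φ : A →+* B) :
    StencilMoments (φ a) (φ b) (φ d) (φ e) (φ f) (φ w₀) (φ w₁) (φ w₂) (φ w₃) where
  center := by simpa [map_ofNat φ 2] using congrArg φ h.center
  near_x := by simpa [map_ofNat φ 2] using congrArg φ h.near_x
  near_y := by simpa [map_ofNat φ 2] using congrArg φ h.near_y
  diagonal := by simpa [map_ofNat φ 2] using congrArg φ h.diagonal
  far_x := by simpa [map_ofNat φ 2] using congrArg φ h.far_x
  far_y := by simpa [map_ofNat φ 2] using congrArg φ h.far_y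

theorem gram_eq (h : StencilMoments a b d e f w₀ w₁ w₂ w₃) {x x' y y' : A}
    (hx : x * x' = 1) (hy : y * y' = 1) :
    (a * (1 - y) + b * (1 - x) + b * (1 - x') + d * (1 - y')) *
        (a * (1 - y') + b * (1 - x') + b * (1 - x) + d * (1 - y)) +
      (e * (1 - x) + f * (1 - x')) * (e * (1 - x') + f * (1 - x)) =
    w₀ - w₁ * (x + x' + y + y') + w₂ * (x * y + x * y' + x' * y + x' * y')
      + w₃ * (x ^ 2 + x' ^ 2 + y ^ 2 + y' ^ 2) := by
  linear_combination h.center + (2 * b ^ 2 + e ^ 2 + f ^ 2) * hx + (a ^ 2 + d ^ 2) * hy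
    - (x + x') * h.near_x - (y + y') * h.near_y
    + (x * y + x * y' + x' * y + x' * y') * h.diagonal
    + (x ^ 2 + x' ^ 2) * h.far_x + (y ^ 2 + y' ^ 2) * h.far_y

open scoped IsMulCommutative in
theorem gram_eq_of_commute {K R : Type*} [CommRing K] [Ring R] [Algebra K R]
    {a b d e f w₀ w₁ w₂ w₃ : K} (h : StencilMoments a b d e f w₀ w₁ w₂ w₃) {x x' y y' : R}
    (hcomm : ∀ u ∈ ({x, x', y, y'} : Set R), ∀ v ∈ ({x, x', y, y'} : Set R), u * v = v * u)
    (hx : x * x' = 1) (hy : y * y' = 1) :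
    (a • (1 - y) + b • (1 - x) + b • (1 - x') + d • (1 - y')) *
        (a • (1 - y') + b • (1 - x') + b • (1 - x) + d • (1 - y)) +
      (e • (1 - x) + f • (1 - x')) * (e • (1 - x') + f • (1 - x)) =
    w₀ • (1 : R) - w₁ • (x + x' + y + y') + w₂ • (x * y + x * y' + x' * y + x' * y')
      + w₃ • (x ^ 2 + x' ^ 2 + y ^ 2 + y' ^ 2) := by
  let S := Algebra.adjoin K ({x, x', y, y'} : Set R)
  have := Algebra.isMulCommutative_adjoin K hcomm
  have mem : ∀ u ∈ ({x, x', y, y'} : Set R), u ∈ S := fun u hu => Algebra.subset_adjoin hu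
  have key := (h.map (algebraMap K S)).gram_eq (x := ⟨x, mem x (by simp)⟩)
    (x' := ⟨x', mem x' (by simp)⟩) (y := ⟨y, mem y (by simp)⟩) (y' := ⟨y', mem y' (by simp)⟩)
    (Subtype.ext hx) (Subtype.ext hy)
  simpa [Algebra.smul_def] using congrArg S.val key

end StencilMoments

theorem stencilMoments_laplacian :
    StencilMoments ((√(23 / 15) + 1) / 2) (3 * √(23 / 15) / 46) ((√(23 / 15) - 1) / 2)
      ((√(104 / 69) + 1) / 2) ((√(104 / 69) - 1) / 2) (6 : ℝ) (26 / 15) (1 / 10) (2 / 15) := by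
  have hs : √(23 / 15) ^ 2 = 23 / 15 := Real.sq_sqrt (by norm_num)
  have ht : √(104 / 69) ^ 2 = 104 / 69 := Real.sq_sqrt (by norm_num)
  constructor <;> ring_nf <;> simp only [hs, ht] <;> norm_num

theorem cycShift_eq_permMatrix (n : ℕ) [NeZero n] :
    cycShift n = Equiv.Perm.permMatrix ℝ (Equiv.subRight (1 : Fin n)) := by
  ext i j
  simp [cycShift, PEquiv.toMatrix_apply, eq_sub_iff_add_eq, Fin.ext_iff, Fin.val_add, eq_comm]

theorem cycShift_mul_transpose (n : ℕ) : cycShift n * (cycShift n)ᵀ = 1 := by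
  rcases n with _ | n
  · exact Subsingleton.elim _ _
  · rw [cycShift_eq_permMatrix, transpose_permMatrix, ← permMatrix_mul, inv_mul_cancel,
      permMatrix_one]

theorem Matrix.commute_kronecker {R m n : Type*} [CommSemiring R] [Fintype m] [Fintype n]
    {A C : Matrix m m R} {B D : Matrix n n R} (hAC : Commute A C) (hBD : Commute B D) :
    Commute (A ⊗ₖ B) (C ⊗ₖ D) := by
  rw [Commute, SemiconjBy, ← mul_kronecker_mul, ← mul_kronecker_mul, hAC.eq, hBD.eq]

/-- there exist weights `b₍₀,₁₎, b₍₁,₀₎, b₍₋₁,₀₎, b₍₀,₋₁₎, c₁, c₋₁`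
such that for every `n ≥ 5`, with `X = S⊗I`, `Y = I⊗S` on the discrete torus,
the horizontal concatenation `B` of `∑ b₍j,k₎(I − XʲYᵏ)` and `∑ c_j(I − Xʲ)`
(with `X⁻¹ = Xᵀ`, `Y⁻¹ = Yᵀ`) satisfies
`B Bᵀ = 6·I − (26/15)(X+Xᵀ+Y+Yᵀ) + (1/10)(XY+XYᵀ+XᵀY+XᵀYᵀ) + (2/15)(X²+(Xᵀ)²+Y²+(Yᵀ)²)`. -/
theorem stmt_16 :
    ∃ b01 b10 bm10 b0m1 c1 cm1 : ℝ, ∀ n : ℕ, 5 ≤ n →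
      ∀ X Y : Matrix (Fin n × Fin n) (Fin n × Fin n) ℝ,
        X = cycShift n ⊗ₖ (1 : Matrix (Fin n) (Fin n) ℝ) →
        Y = (1 : Matrix (Fin n) (Fin n) ℝ) ⊗ₖ cycShift n →
        ∀ B : Matrix (Fin n × Fin n) ((Fin n × Fin n) ⊕ (Fin n × Fin n)) ℝ,
          B = Matrix.fromCols
              (b01 • (1 - Y) + b10 • (1 - X) + bm10 • (1 - Xᵀ) + b0m1 • (1 - Yᵀ))
              (c1 • (1 - X) + cm1 • (1 - Xᵀ)) →
          B * Bᵀ = (6 : ℝ) • (1 : Matrix (Fin n × Fin n) (Fin n × Fin n) ℝ)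
              - (26 / 15 : ℝ) • (X + Xᵀ + Y + Yᵀ)
              + (1 / 10 : ℝ) • (X * Y + X * Yᵀ + Xᵀ * Y + Xᵀ * Yᵀ)
              + (2 / 15 : ℝ) • (X ^ 2 + (Xᵀ) ^ 2 + Y ^ 2 + (Yᵀ) ^ 2) := by
  refine ⟨(√(23 / 15) + 1) / 2, 3 * √(23 / 15) / 46, 3 * √(23 / 15) / 46, (√(23 / 15) - 1) / 2,
    (√(104 / 69) + 1) / 2, (√(104 / 69) - 1) / 2, fun n _ X Y hX hY B hB => ?_⟩
  set S := cycShift n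
  have hS : S * Sᵀ = 1 := cycShift_mul_transpose n
  have hSS : Commute S Sᵀ := hS.trans (mul_eq_one_comm.mp hS).symm
  subst hX hY hB
  rw [transpose_fromCols, fromCols_mul_fromRows]
  simp only [transpose_add, transpose_smul, transpose_sub, transpose_one, transpose_transpose,
    ← kroneckerMap_transpose]
  refine stencilMoments_laplacian.gram_eq_of_commute ?_ ?_ ?_
  · simp only [Set.mem_insert_iff, Set.mem_singleton_iff]
    rintro u (rfl | rfl | rfl | rfl) v (rfl | rfl | rfl | rfl) <;>
      exact (commute_kronecker (by simp [hSS, hSS.symm]) (by simp [hSS, hSS.symm])).eq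
  · rw [← mul_kronecker_mul, hS, mul_one, one_kronecker_one]
  · rw [← mul_kronecker_mul, hS, mul_one, one_kronecker_one]
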